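/- The Routh-sphere vector field X preserves the four integrals of motion H1 = (M, ω), H2 = (M, M) − m(r, r)·H1, H3 = (M, r) (the Jellet integral) and H4 = (γ, γ): for every point (γ, M) of the region considered, the derivative of each H_i along X vanishes, X(H_i) = 0 for i = 1, 2, 3, 4. -/

import Mathlib

noncomputable section

/-- Phase-space factor `ℝ³`. -/
abbrev V3 : Type := Fin 3 → ℝ

/-- Euclidean inner product `(u, v)` on `ℝ³`. -/
def dot3 (u v : V3) : ℝ := u 0 * v 0 + u 1 * v 1 + u 2 * v 2

/-- Cross product `u × v` on `ℝ³`. -/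
def cross3 (u v : V3) : V3 :=
  ![u 1 * v 2 - u 2 * v 1, u 2 * v 0 - u 0 * v 2, u 0 * v 1 - u 1 * v 0]

/-- The vector `r = (Rγ₁, Rγ₂, Rγ₃ + a)` joining the center of mass with the contact point. -/
def rvec (R a : ℝ) (γ : V3) : V3 := ![R * γ 0, R * γ 1, R * γ 2 + a]

/-- The tensor `I_Q = I + m (r,r) E − m r ⊗ r` with `I = diag (I1, I1, I3)`. -/
def IQ (m R I1 I3 a : ℝ) (γ : V3) : Matrix (Fin 3) (Fin 3) ℝ :=
  Matrix.diagonal ![I1, I1, I3]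
    + (m * dot3 (rvec R a γ) (rvec R a γ)) • (1 : Matrix (Fin 3) (Fin 3) ℝ)
    - m • Matrix.of (fun i j => rvec R a γ i * rvec R a γ j)

/-- The angular velocity `ω`, defined by `M = I_Q ω`. -/
def omega3 (m R I1 I3 a : ℝ) (γ M : V3) : V3 := ((IQ m R I1 I3 a γ)⁻¹).mulVec M

/-- The density `g(γ)` of the invariant measure. -/
def gR (m R I1 I3 a : ℝ) (γ : V3) : ℝ :=
  Real.sqrt (I1 * I3 + I1 * m * R ^ 2 * (dot3 γ γ - γ 2 ^ 2) + I3 * m * (R * γ 2 + a) ^ 2)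

/-- The Routh-sphere vector field: `γ' = γ × ω`, `M' = M × ω + m r' × (ω × r)`,
`r' = R (γ × ω)`. -/
def XR (m R I1 I3 a : ℝ) (p : V3 × V3) : V3 × V3 :=
  (cross3 p.1 (omega3 m R I1 I3 a p.1 p.2),
   cross3 p.2 (omega3 m R I1 I3 a p.1 p.2)
     + m • cross3 (R • cross3 p.1 (omega3 m R I1 I3 a p.1 p.2))
         (cross3 (omega3 m R I1 I3 a p.1 p.2) (rvec R a p.1)))

/-- `H₁ = (M, ω)`. -/
def H1R (m R I1 I3 a : ℝ) (p : V3 × V3) : ℝ := dot3 p.2 (omega3 m R I1 I3 a p.1 p.2)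

/-- `H₂ = (M, M) − m (r, r) H₁`. -/
def H2R (m R I1 I3 a : ℝ) (p : V3 × V3) : ℝ :=
  dot3 p.2 p.2 - m * dot3 (rvec R a p.1) (rvec R a p.1) * H1R m R I1 I3 a p

/-- The Jellet integral `H₃ = (M, r)`. -/
def H3R (R a : ℝ) (p : V3 × V3) : ℝ := dot3 p.2 (rvec R a p.1)

/-- `H₄ = (γ, γ)`. -/
def H4R (p : V3 × V3) : ℝ := dot3 p.1 p.1

/-- The Routh integral `Ĥ₂ = g(γ) ω₃`. -/
def Hhat2R (m R I1 I3 a : ℝ) (p : V3 × V3) : ℝ :=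
  gR m R I1 I3 a p.1 * omega3 m R I1 I3 a p.1 p.2 2

/-!
Each integral is differentiated along the line `s ↦ p + s • X p`. Because `I_Q` is symmetric and
`I_Q ω = M`, the derivative of `H₁ = (M, ω)` is `2 (Ṁ, ω) - (ω, İ_Q ω)`, so `ω̇` never has to be
computed; `ω` itself is differentiable by Cramer's rule. The velocity `ṙ = R (γ × ω)` of the
contact vector is orthogonal to `ω`, which turns `ṙ × (ω × r)` into `(ṙ, r) ω`. Hence
`2 (Ṁ, ω) = 2 m (ṙ, r) |ω|² = (ω, İ_Q ω)`, and `(Ṁ, M) = m (ṙ, r) H₁` gives `H₂`. In the Jellet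
integral the `m`-terms cancel, and the rest vanishes because `I₁ = I₂` and `r - R γ` lies on the
symmetry axis.
-/

open Matrix Filter Topology

section Calculus

variable {𝕜 E : Type*} [NontriviallyNormedField 𝕜] [NormedAddCommGroup E] [NormedSpace 𝕜 E]
  {n : Type*} [Fintype n]

theorem DifferentiableAt.dotProduct {u w : E → n → 𝕜} {x : E} (hu : DifferentiableAt 𝕜 u x)
    (hw : DifferentiableAt 𝕜 w x) : DifferentiableAt 𝕜 (fun y => u y ⬝ᵥ w y) x := by
  unfold _root_.dotProduct
  have hu' := differentiableAt_pi.1 hu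
  have hw' := differentiableAt_pi.1 hw
  fun_prop

theorem DifferentiableAt.matrix_det [DecidableEq n] {A : E → Matrix n n 𝕜} {x : E}
    (hA : ∀ i j, DifferentiableAt 𝕜 (fun y => A y i j) x) :
    DifferentiableAt 𝕜 (fun y => (A y).det) x := by
  simp only [Matrix.det_apply']
  fun_prop

theorem DifferentiableAt.matrix_inv_mulVec [DecidableEq n] {A : E → Matrix n n 𝕜} {v : E → n → 𝕜}
    {x : E}
    (hA : ∀ i j, DifferentiableAt 𝕜 (fun y => A y i j) x) (hv : DifferentiableAt 𝕜 v x)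
    (hdet : (A x).det ≠ 0) : DifferentiableAt 𝕜 (fun y => (A y)⁻¹ *ᵥ v y) x := by
  have hcramer : ∀ y, (A y)⁻¹ *ᵥ v y = (A y).det⁻¹ • cramer (A y) (v y) := by
    intro y
    rw [cramer_eq_adjugate_mulVec, inv_def, Ring.inverse_eq_inv', smul_mulVec]
  simp only [hcramer]
  refine ((DifferentiableAt.matrix_det hA).inv hdet).smul (differentiableAt_pi.2 fun i => ?_)
  simp only [cramer_apply]
  refine DifferentiableAt.matrix_det fun k l => ?_
  simp only [updateCol_apply]
  split_ifs
  · exact differentiableAt_pi.1 hv k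
  · exact hA k l

theorem HasDerivAt.dotProduct {u w : 𝕜 → n → 𝕜} {u' w' : n → 𝕜} {t : 𝕜}
    (hu : HasDerivAt u u' t) (hw : HasDerivAt w w' t) :
    HasDerivAt (fun s => u s ⬝ᵥ w s) (u' ⬝ᵥ w t + u t ⬝ᵥ w') t := by
  have h i : HasDerivAt (fun s => u s i * w s i) (u' i * w t i + u t i * w' i) t :=
    (hasDerivAt_pi.1 hu i).mul (hasDerivAt_pi.1 hw i)
  simpa [_root_.dotProduct, Finset.sum_add_distrib] using
    HasDerivAt.fun_sum (u := Finset.univ) fun i _ => h i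

theorem HasDerivAt.matrix_mulVec {A : 𝕜 → Matrix n n 𝕜} {A' : Matrix n n 𝕜} {w : 𝕜 → n → 𝕜}
    {w' : n → 𝕜} {t : 𝕜} (hA : ∀ i j, HasDerivAt (fun s => A s i j) (A' i j) t)
    (hw : HasDerivAt w w' t) :
    HasDerivAt (fun s => A s *ᵥ w s) (A' *ᵥ w t + A t *ᵥ w') t :=
  hasDerivAt_pi.2 fun i => (HasDerivAt.dotProduct (hasDerivAt_pi.2 (hA i)) hw)

theorem HasDerivAt.dotProduct_of_mulVec_eq [DecidableEq n] {A : 𝕜 → Matrix n n 𝕜}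
    {A' : Matrix n n 𝕜} {ω M : 𝕜 → n → 𝕜} {ω' M' : n → 𝕜} {t : 𝕜}
    (hA : ∀ i j, HasDerivAt (fun s => A s i j) (A' i j) t) (hω : HasDerivAt ω ω' t)
    (hM : HasDerivAt M M' t) (hsymm : (A t)ᵀ = A t) (hAω : ∀ᶠ s in 𝓝 t, A s *ᵥ ω s = M s) :
    HasDerivAt (fun s => M s ⬝ᵥ ω s) (2 * (M' ⬝ᵥ ω t) - ω t ⬝ᵥ A' *ᵥ ω t) t := by
  have hM' : M' = A' *ᵥ ω t + A t *ᵥ ω' :=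
    hM.unique ((HasDerivAt.matrix_mulVec hA hω).congr_of_eventuallyEq (EventuallyEq.symm hAω))
  have hMt : M t = A t *ᵥ ω t := hAω.self_of_nhds.symm
  have hA_symm : A t *ᵥ ω' ⬝ᵥ ω t = A t *ᵥ ω t ⬝ᵥ ω' := by
    rw [dotProduct_comm, dotProduct_mulVec, ← mulVec_transpose, hsymm]
  convert hM.dotProduct hω using 1
  rw [hMt, hM', add_dotProduct, hA_symm, dotProduct_comm (A' *ᵥ ω t)]
  ring

theorem hasDerivAt_const_add_smul {F : Type*} [NormedAddCommGroup F] [NormedSpace 𝕜 F]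
    (x v : F) (t : 𝕜) : HasDerivAt (fun s : 𝕜 => x + s • v) v t := by
  simpa using ((hasDerivAt_id t).smul_const v).const_add x

theorem DifferentiableAt.fderiv_apply_eq_of_hasDerivAt {F : Type*} [NormedAddCommGroup F]
    [NormedSpace 𝕜 F] {f : E → F} {x v : E} {f' : F} (hf : DifferentiableAt 𝕜 f x)
    (h : HasDerivAt (fun t : 𝕜 => f (x + t • v)) f' 0) : fderiv 𝕜 f x v = f' := by
  rw [← hf.lineDeriv_eq_fderiv]
  exact HasLineDerivAt.lineDeriv h

end Calculus

theorem cross_cross_of_dotProduct_eq_zero {K : Type*} [CommRing K] {u v : Fin 3 → K}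
    (w : Fin 3 → K) (h : v ⬝ᵥ u = 0) : u ⨯₃ (v ⨯₃ w) = (u ⬝ᵥ w) • v := by
  rw [cross_cross_eq_smul_sub_smul', h, zero_smul, sub_zero]

section RouthSphere

variable (m R I1 I3 a : ℝ)

theorem dot3_eq_dotProduct (u v : V3) : dot3 u v = u ⬝ᵥ v := (vec3_dotProduct u v).symm

theorem cross3_eq_crossProduct (u v : V3) : cross3 u v = u ⨯₃ v := rfl

theorem rvec_eq (γ : V3) : rvec R a γ = R • γ + Pi.single 2 a := by
  ext i
  fin_cases i <;> simp [rvec]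

theorem IQ_eq (γ : V3) : IQ m R I1 I3 a γ = diagonal ![I1, I1, I3]
    + (m * (rvec R a γ ⬝ᵥ rvec R a γ)) • 1 - m • vecMulVec (rvec R a γ) (rvec R a γ) := by
  rw [IQ, dot3_eq_dotProduct]
  rfl

theorem IQ_apply (γ : V3) (i j : Fin 3) : IQ m R I1 I3 a γ i j = diagonal ![I1, I1, I3] i j
    + m * (rvec R a γ ⬝ᵥ rvec R a γ) * (1 : Matrix (Fin 3) (Fin 3) ℝ) i j
    - m * (rvec R a γ i * rvec R a γ j) := by
  simp only [IQ_eq, Matrix.add_apply, Matrix.sub_apply, Matrix.smul_apply, vecMulVec_apply,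
    smul_eq_mul, mul_assoc]

theorem IQ_transpose (γ : V3) : (IQ m R I1 I3 a γ)ᵀ = IQ m R I1 I3 a γ := by
  simp [IQ_eq, transpose_vecMulVec]

theorem IQ_mulVec_omega3 {γ : V3} (M : V3) (h : (IQ m R I1 I3 a γ).det ≠ 0) :
    IQ m R I1 I3 a γ *ᵥ omega3 m R I1 I3 a γ M = M := by
  rw [omega3, mulVec_mulVec, mul_nonsing_inv _ (isUnit_iff_ne_zero.2 h), one_mulVec]

theorem hasDerivAt_rvec {g : ℝ → V3} {g' : V3} {t : ℝ} (hg : HasDerivAt g g' t) :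
    HasDerivAt (fun s => rvec R a (g s)) (R • g') t := by
  simp only [rvec_eq]
  exact (hg.const_smul R).add_const _

theorem differentiableAt_rvec {E : Type*} [NormedAddCommGroup E] [NormedSpace ℝ E]
    {g : E → V3} {x : E} (hg : DifferentiableAt ℝ g x) :
    DifferentiableAt ℝ (fun y => rvec R a (g y)) x := by
  simp only [rvec_eq]
  exact (hg.const_smul R).add_const _

def IQDeriv (r r' : V3) : Matrix (Fin 3) (Fin 3) ℝ :=
  (2 * m * (r ⬝ᵥ r')) • 1 - m • (vecMulVec r' r + vecMulVec r r')

theorem hasDerivAt_IQ_apply {g : ℝ → V3} {g' : V3} {t : ℝ} (hg : HasDerivAt g g' t) (i j : Fin 3) :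
    HasDerivAt (fun s => IQ m R I1 I3 a (g s) i j)
      (IQDeriv m (rvec R a (g t)) (R • g') i j) t := by
  have hr := hasDerivAt_rvec R a hg
  simp only [IQ_apply]
  refine ((((hr.dotProduct hr).const_mul m).mul_const
    ((1 : Matrix (Fin 3) (Fin 3) ℝ) i j)).const_add (diagonal ![I1, I1, I3] i j)).fun_sub
    (((hasDerivAt_pi.1 hr i).fun_mul (hasDerivAt_pi.1 hr j)).const_mul m) |>.congr_deriv ?_
  simp only [IQDeriv, Matrix.sub_apply, Matrix.smul_apply, Matrix.add_apply, vecMulVec_apply,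
    smul_eq_mul, dotProduct_comm (R • g')]
  ring

theorem differentiableAt_IQ_apply {E : Type*} [NormedAddCommGroup E] [NormedSpace ℝ E]
    {g : E → V3} {x : E} (hg : DifferentiableAt ℝ g x) (i j : Fin 3) :
    DifferentiableAt ℝ (fun y => IQ m R I1 I3 a (g y) i j) x := by
  have hr := differentiableAt_rvec R a hg
  have hri := differentiableAt_pi.1 hr
  have hrr := hr.dotProduct hr
  simp only [IQ_apply]
  fun_prop

theorem differentiableAt_omega3 {p : V3 × V3} (h : (IQ m R I1 I3 a p.1).det ≠ 0) :
    DifferentiableAt ℝ (fun q : V3 × V3 => omega3 m R I1 I3 a q.1 q.2) p :=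
  DifferentiableAt.matrix_inv_mulVec (differentiableAt_IQ_apply m R I1 I3 a differentiableAt_fst)
    differentiableAt_snd h

theorem XR_fst (p : V3 × V3) :
    (XR m R I1 I3 a p).1 = p.1 ⨯₃ omega3 m R I1 I3 a p.1 p.2 := rfl

theorem XR_eq (p : V3 × V3) : XR m R I1 I3 a p =
    (p.1 ⨯₃ omega3 m R I1 I3 a p.1 p.2,
      p.2 ⨯₃ omega3 m R I1 I3 a p.1 p.2 + (m * (R • (p.1 ⨯₃ omega3 m R I1 I3 a p.1 p.2)
        ⬝ᵥ rvec R a p.1)) • omega3 m R I1 I3 a p.1 p.2) := by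
  rw [XR, cross3_eq_crossProduct, cross3_eq_crossProduct, cross3_eq_crossProduct,
    cross3_eq_crossProduct, cross_cross_of_dotProduct_eq_zero _ (by simp), smul_smul]

theorem dotProduct_IQDeriv_mulVec {ω r r' : V3} (h : ω ⬝ᵥ r' = 0) :
    ω ⬝ᵥ IQDeriv m r r' *ᵥ ω = 2 * m * (r ⬝ᵥ r') * (ω ⬝ᵥ ω) := by
  simp only [IQDeriv, sub_mulVec, add_mulVec, smul_mulVec, one_mulVec, vecMulVec_mulVec,
    dotProduct_sub, dotProduct_add, dotProduct_smul, dotProduct_comm r' ω, h, smul_eq_mul,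
    MulOpposite.smul_eq_mul_unop, MulOpposite.unop_op]
  ring

theorem XR_snd_dotProduct_omega3 (p : V3 × V3) :
    (XR m R I1 I3 a p).2 ⬝ᵥ omega3 m R I1 I3 a p.1 p.2 =
      m * (R • (p.1 ⨯₃ omega3 m R I1 I3 a p.1 p.2) ⬝ᵥ rvec R a p.1)
        * (omega3 m R I1 I3 a p.1 p.2 ⬝ᵥ omega3 m R I1 I3 a p.1 p.2) := by
  rw [XR_eq, add_dotProduct, dotProduct_comm, dot_cross_self, smul_dotProduct, smul_eq_mul,
    zero_add]

theorem XR_snd_dotProduct_snd (p : V3 × V3) :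
    (XR m R I1 I3 a p).2 ⬝ᵥ p.2 =
      m * (R • (p.1 ⨯₃ omega3 m R I1 I3 a p.1 p.2) ⬝ᵥ rvec R a p.1)
        * (omega3 m R I1 I3 a p.1 p.2 ⬝ᵥ p.2) := by
  rw [XR_eq, add_dotProduct, dotProduct_comm, dot_self_cross, smul_dotProduct, smul_eq_mul,
    zero_add]

theorem XR_fst_dotProduct_fst (p : V3 × V3) : (XR m R I1 I3 a p).1 ⬝ᵥ p.1 = 0 := by
  rw [XR_fst, dotProduct_comm, dot_self_cross]

theorem XR_snd_dotProduct_rvec_add (p : V3 × V3) (h : (IQ m R I1 I3 a p.1).det ≠ 0) :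
    (XR m R I1 I3 a p).2 ⬝ᵥ rvec R a p.1 + p.2 ⬝ᵥ R • (XR m R I1 I3 a p).1 = 0 := by
  obtain ⟨γ, M⟩ := p
  dsimp only at h ⊢
  have hM := IQ_mulVec_omega3 m R I1 I3 a M h
  rw [XR_eq]
  dsimp only
  generalize omega3 m R I1 I3 a γ M = ω at hM ⊢
  subst hM
  simp only [dotProduct, IQ_eq, diagonal, rvec, Fin.sum_univ_three, cons_val_zero, cons_val_one,
    cons_val, vecMulVec, smul_of, cross_apply, mulVec, Matrix.sub_apply, Matrix.add_apply, of_apply,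
    Matrix.smul_apply, smul_eq_mul, Pi.smul_apply, Pi.add_apply, one_apply_ne, one_apply_eq, ne_eq,
    Fin.reduceEq, not_false_eq_true, reduceIte]
  ring

theorem differentiableAt_H1R {p : V3 × V3} (h : (IQ m R I1 I3 a p.1).det ≠ 0) :
    DifferentiableAt ℝ (H1R m R I1 I3 a) p := by
  unfold H1R
  simp only [dot3_eq_dotProduct]
  exact differentiableAt_snd.dotProduct (differentiableAt_omega3 m R I1 I3 a h)

theorem differentiableAt_H2R {p : V3 × V3} (h : (IQ m R I1 I3 a p.1).det ≠ 0) :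
    DifferentiableAt ℝ (H2R m R I1 I3 a) p := by
  have hr := differentiableAt_rvec R a (differentiableAt_fst (p := p))
  have hH1 := differentiableAt_H1R m R I1 I3 a h
  unfold H2R
  simp only [dot3_eq_dotProduct]
  exact (differentiableAt_snd.dotProduct differentiableAt_snd).sub
    (((hr.dotProduct hr).const_mul m).mul hH1)

theorem differentiableAt_H3R (p : V3 × V3) : DifferentiableAt ℝ (H3R R a) p := by
  unfold H3R
  simp only [dot3_eq_dotProduct]
  exact differentiableAt_snd.dotProduct (differentiableAt_rvec R a differentiableAt_fst)

theorem differentiableAt_H4R (p : V3 × V3) : DifferentiableAt ℝ H4R p := by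
  unfold H4R
  simp only [dot3_eq_dotProduct]
  exact differentiableAt_fst.dotProduct differentiableAt_fst

theorem hasDerivAt_H1R_line (p : V3 × V3) (h : (IQ m R I1 I3 a p.1).det ≠ 0) :
    HasDerivAt (fun s : ℝ => H1R m R I1 I3 a (p + s • XR m R I1 I3 a p)) 0 0 := by
  set v := XR m R I1 I3 a p with hv
  have hγ : HasDerivAt (fun s : ℝ => (p + s • v).1) v.1 0 := hasDerivAt_const_add_smul p.1 v.1 0
  have hM : HasDerivAt (fun s : ℝ => (p + s • v).2) v.2 0 := hasDerivAt_const_add_smul p.2 v.2 0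
  have hω : HasDerivAt (fun s : ℝ => omega3 m R I1 I3 a (p + s • v).1 (p + s • v).2)
      (fderiv ℝ (fun q : V3 × V3 => omega3 m R I1 I3 a q.1 q.2) p v) 0 :=
    (differentiableAt_omega3 m R I1 I3 a h).hasFDerivAt.comp_hasDerivAt_of_eq 0
      (hasDerivAt_const_add_smul p v 0) (by simp)
  have hAω : ∀ᶠ s in 𝓝 (0 : ℝ), IQ m R I1 I3 a (p + s • v).1
      *ᵥ omega3 m R I1 I3 a (p + s • v).1 (p + s • v).2 = (p + s • v).2 := by
    have hline : Tendsto (fun s : ℝ => p + s • v) (𝓝 0) (𝓝 p) := by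
      simpa using (hasDerivAt_const_add_smul p v (0 : ℝ)).continuousAt.tendsto
    have hdet : ∀ᶠ q in 𝓝 p, (IQ m R I1 I3 a q.1).det ≠ 0 :=
      (DifferentiableAt.matrix_det (differentiableAt_IQ_apply m R I1 I3 a
        differentiableAt_fst)).continuousAt.eventually_ne h
    exact hline.eventually (hdet.mono fun q hq => IQ_mulVec_omega3 m R I1 I3 a q.2 hq)
  simp only [H1R.eq_def, dot3_eq_dotProduct]
  refine (HasDerivAt.dotProduct_of_mulVec_eq (hasDerivAt_IQ_apply m R I1 I3 a hγ) hω hM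
    (IQ_transpose m R I1 I3 a _) hAω).congr_deriv ?_
  have hperp : omega3 m R I1 I3 a p.1 p.2 ⬝ᵥ R • v.1 = 0 := by simp [hv, XR_fst]
  simp only [zero_smul, add_zero]
  rw [dotProduct_IQDeriv_mulVec m hperp, hv, XR_snd_dotProduct_omega3, XR_fst,
    dotProduct_comm (rvec R a p.1)]
  ring

theorem hasDerivAt_H2R_line (p : V3 × V3) (h : (IQ m R I1 I3 a p.1).det ≠ 0) :
    HasDerivAt (fun s : ℝ => H2R m R I1 I3 a (p + s • XR m R I1 I3 a p)) 0 0 := by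
  set v := XR m R I1 I3 a p with hv
  have hM : HasDerivAt (fun s : ℝ => (p + s • v).2) v.2 0 := hasDerivAt_const_add_smul p.2 v.2 0
  have hr := hasDerivAt_rvec R a (hasDerivAt_const_add_smul p.1 v.1 0)
  simp only [H2R.eq_def, dot3_eq_dotProduct]
  refine ((hM.dotProduct hM).fun_sub (((hr.dotProduct hr).const_mul m).fun_mul
    (hasDerivAt_H1R_line m R I1 I3 a p h))).congr_deriv ?_
  simp only [zero_smul, add_zero]
  rw [dotProduct_comm p.2, hv, XR_snd_dotProduct_snd, H1R, dot3_eq_dotProduct, XR_fst,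
    dotProduct_comm (rvec R a p.1), dotProduct_comm p.2]
  ring

theorem hasDerivAt_H3R_line (p : V3 × V3) (h : (IQ m R I1 I3 a p.1).det ≠ 0) :
    HasDerivAt (fun s : ℝ => H3R R a (p + s • XR m R I1 I3 a p)) 0 0 := by
  set v := XR m R I1 I3 a p
  have hM : HasDerivAt (fun s : ℝ => (p + s • v).2) v.2 0 := hasDerivAt_const_add_smul p.2 v.2 0
  have hr := hasDerivAt_rvec R a (hasDerivAt_const_add_smul p.1 v.1 0)
  simp only [H3R.eq_def, dot3_eq_dotProduct]
  refine (hM.dotProduct hr).congr_deriv ?_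
  simp only [zero_smul, add_zero]
  exact XR_snd_dotProduct_rvec_add m R I1 I3 a p h

theorem hasDerivAt_H4R_line (p : V3 × V3) :
    HasDerivAt (fun s : ℝ => H4R (p + s • XR m R I1 I3 a p)) 0 0 := by
  set v := XR m R I1 I3 a p with hv
  have hγ : HasDerivAt (fun s : ℝ => (p + s • v).1) v.1 0 := hasDerivAt_const_add_smul p.1 v.1 0
  simp only [H4R.eq_def, dot3_eq_dotProduct]
  refine (hγ.dotProduct hγ).congr_deriv ?_
  simp only [zero_smul, add_zero]
  rw [dotProduct_comm p.1, hv, XR_fst_dotProduct_fst, add_zero]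

end RouthSphere

theorem routh_sphere_integrals_general (m R I1 I3 a : ℝ)
    (p : V3 × V3) (hreg : IsUnit (IQ m R I1 I3 a p.1).det) :
    fderiv ℝ (H1R m R I1 I3 a) p (XR m R I1 I3 a p) = 0 ∧
    fderiv ℝ (H2R m R I1 I3 a) p (XR m R I1 I3 a p) = 0 ∧
    fderiv ℝ (H3R R a) p (XR m R I1 I3 a p) = 0 ∧
    fderiv ℝ H4R p (XR m R I1 I3 a p) = 0 := by
  have h := hreg.ne_zero
  refine ⟨?_, ?_, ?_, ?_⟩
  · exact (differentiableAt_H1R m R I1 I3 a h).fderiv_apply_eq_of_hasDerivAt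
      (hasDerivAt_H1R_line m R I1 I3 a p h)
  · exact (differentiableAt_H2R m R I1 I3 a h).fderiv_apply_eq_of_hasDerivAt
      (hasDerivAt_H2R_line m R I1 I3 a p h)
  · exact (differentiableAt_H3R R a p).fderiv_apply_eq_of_hasDerivAt
      (hasDerivAt_H3R_line m R I1 I3 a p h)
  · exact (differentiableAt_H4R p).fderiv_apply_eq_of_hasDerivAt
      (hasDerivAt_H4R_line m R I1 I3 a p)

/-- The Routh-sphere vector field `X` preserves the four integrals of motion
`H₁ = (M, ω)`, `H₂ = (M, M) − m (r, r) H₁`, `H₃ = (M, r)` and `H₄ = (γ, γ)`: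
at every point of the region where `I_Q` is invertible, `X(H_i) = 0` for `i = 1, 2, 3, 4`. -/
theorem routh_sphere_integrals (m R I1 I3 a : ℝ) (hm : 0 < m) (hR : 0 < R) (hI1 : 0 < I1) (hI3 : 0 < I3)
    (p : V3 × V3) (hreg : IsUnit (IQ m R I1 I3 a p.1).det) :
    fderiv ℝ (H1R m R I1 I3 a) p (XR m R I1 I3 a p) = 0 ∧
    fderiv ℝ (H2R m R I1 I3 a) p (XR m R I1 I3 a p) = 0 ∧
    fderiv ℝ (H3R R a) p (XR m R I1 I3 a p) = 0 ∧
    fderiv ℝ H4R p (XR m R I1 I3 a p) = 0 :=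
  routh_sphere_integrals_general m R I1 I3 a p hreg
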